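/- arXiv:1704.08472 — 2 statements merged into one kernel-verified Lean document; each statement's English description precedes it below -/
import Mathlib

section
/- For every integer k ≥ 2 and every finite simple graph G with maximum degree at most 1, f_k(G) ≤ ⌊(k − 1)/2⌋; moreover for every k ≥ 3 there exists a graph G with maximum degree exactly 1 and f_k(G) = ⌊(k − 1)/2⌋ (namely ⌊(k−1)/2⌋ disjoint copies of K₂). -/
open Finset

variable {V : Type*}

open scoped Classical in
/-- Degree of `v` in the subgraph of `G` induced on the vertex set `A`
(number of neighbours of `v` inside `A`). -/
noncomputable def degOn (G : SimpleGraph V) (A : Finset V) (v : V) : ℕ :=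
  (A.filter fun w => G.Adj v w).card

/-- Maximum degree of the subgraph of `G` induced on `A`. -/
noncomputable def maxDegOn (G : SimpleGraph V) (A : Finset V) : ℕ :=
  A.sup (degOn G A)

open scoped Classical in
/-- The subgraph of `G` induced on `A` has fewer than `k` vertices or at least `k`
vertices realising its maximum degree. -/
def equates (G : SimpleGraph V) (k : ℕ) (A : Finset V) : Prop :=
  A.card < k ∨ k ≤ (A.filter fun v => degOn G A v = maxDegOn G A).card

open scoped Classical in
/-- `f_k` of the subgraph of `G` induced on `A`: the minimum number of vertices of `A`
whose deletion leaves an induced subgraph with fewer than `k` vertices or with at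
least `k` vertices realising its maximum degree. -/
noncomputable def fkOn (G : SimpleGraph V) (k : ℕ) (A : Finset V) : ℕ :=
  sInf {m | ∃ S, S ⊆ A ∧ S.card = m ∧ equates G k (A \ S)}

/-- `f_k(G)`. -/
noncomputable def fk [Fintype V] (G : SimpleGraph V) (k : ℕ) : ℕ :=
  fkOn G k Finset.univ

/-- `diff` of the subgraph of `G` induced on `A`: the largest degree minus the
second-largest degree (with multiplicity) of this subgraph. -/
noncomputable def diffOn (G : SimpleGraph V) (A : Finset V) : ℕ :=
  maxDegOn G A - ((A.val.map (degOn G A)).erase (maxDegOn G A)).sup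

/-- `diff(G) = d₁ - d₂`, the difference between the largest and second-largest
vertex degrees of `G`. -/
noncomputable def diffDeg [Fintype V] (G : SimpleGraph V) : ℕ :=
  diffOn G Finset.univ

universe u

/-! A graph of maximum degree at most one is a matching plus isolated vertices, and the vertices
of degree one are exactly the `2e` endpoints of its `e` edges. If `k ≤ 2e`, these already realise
the maximum degree `k` times. Otherwise `e ≤ ⌊(k - 1)/2⌋`, and deleting one endpoint of every
edge (a vertex cover) leaves an edgeless graph, in which every vertex has maximum degree.

For sharpness take `m = ⌊(k - 1)/2⌋` disjoint edges together with `k` isolated vertices (without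
them the graph has fewer than `k` vertices and `f_k = 0`). Deleting fewer than `m` vertices
keeps some edge and at least `k` vertices, so the maximum degree stays one and is realised only
by the at most `2m < k` matched vertices. -/

section

open SimpleGraph

variable (G : SimpleGraph V)

lemma degOn_le_maxDegOn {A : Finset V} {v : V} (hv : v ∈ A) : degOn G A v ≤ maxDegOn G A :=
  le_sup hv

lemma degOn_pos {A : Finset V} {v w : V} (hw : w ∈ A) (h : G.Adj v w) : 0 < degOn G A v := by
  classical
  exact card_pos.mpr ⟨w, mem_filter.mpr ⟨hw, h⟩⟩

lemma maxDegOn_eq_one_of_adj {A : Finset V} {a b : V} (hA : maxDegOn G A ≤ 1) (ha : a ∈ A)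
    (hb : b ∈ A) (hab : G.Adj a b) : maxDegOn G A = 1 :=
  hA.antisymm ((degOn_pos G hb hab).trans_le (degOn_le_maxDegOn G ha))

lemma degOn_eq_zero {A : Finset V} {v : V} (h : ∀ w ∈ A, ¬G.Adj v w) : degOn G A v = 0 := by
  classical
  exact card_eq_zero.mpr (filter_false_of_mem h)

lemma maxDegOn_le_one (h : ∀ v w w', G.Adj v w → G.Adj v w' → w = w') (A : Finset V) :
    maxDegOn G A ≤ 1 := by
  classical
  exact Finset.sup_le fun v _ => card_le_one.mpr fun w hw w' hw' =>
    h v w w' (mem_filter.mp hw).2 (mem_filter.mp hw').2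

lemma degOn_univ [Fintype V] [DecidableRel G.Adj] (v : V) : degOn G univ v = G.degree v := by
  rw [degOn, ← card_neighborFinset_eq_degree, G.neighborFinset_eq_filter]
  congr

lemma equates_empty (k : ℕ) : equates G k ∅ := by
  rcases k.eq_zero_or_pos with rfl | hk
  · exact Or.inr (Nat.zero_le _)
  · exact Or.inl hk

lemma equates_of_isIndepSet {A : Finset V} (hA : G.IsIndepSet (A : Set V)) (k : ℕ) :
    equates G k A := by
  classical
  have hdeg : ∀ v ∈ A, degOn G A v = 0 := fun v hv =>
    degOn_eq_zero G fun w hw hvw => hA hv hw hvw.ne hvw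
  have hmax : maxDegOn G A = 0 := Nat.eq_zero_of_le_zero (Finset.sup_le fun v hv => (hdeg v hv).le)
  rw [equates, filter_true_of_mem fun v hv => (hdeg v hv).trans hmax.symm]
  exact lt_or_ge _ _

lemma not_equates_of_adj {A D : Finset V} {k : ℕ} {a b : V} (hA : maxDegOn G A ≤ 1)
    (ha : a ∈ A) (hb : b ∈ A) (hab : G.Adj a b) (hD : ∀ v w, G.Adj v w → v ∈ D)
    (hDk : #D < k) (hkA : k ≤ #A) : ¬equates G k A := by
  classical
  have hmax := maxDegOn_eq_one_of_adj G hA ha hb hab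
  have hsub : A.filter (fun v => degOn G A v = maxDegOn G A) ⊆ D := by
    intro v hv
    obtain ⟨-, hv⟩ := mem_filter.mp hv
    obtain ⟨w, hw⟩ := card_pos.mp (hv.trans hmax ▸ Nat.one_pos)
    exact hD v w (mem_filter.mp hw).2
  rintro (h | h)
  · omega
  · have := card_le_card hsub
    omega

lemma fkOn_le [DecidableEq V] {k : ℕ} {A S : Finset V} (hS : S ⊆ A)
    (h : equates G k (A \ S)) : fkOn G k A ≤ #S :=
  Nat.sInf_le ⟨S, hS, rfl, by convert h⟩

lemma le_fkOn [DecidableEq V] {k m : ℕ} {A : Finset V}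
    (h : ∀ S ⊆ A, equates G k (A \ S) → m ≤ #S) : m ≤ fkOn G k A :=
  le_csInf ⟨#A, A, subset_rfl, rfl, by convert equates_empty G k; simp⟩
    fun _ ⟨S, hS, hm, hSk⟩ => hm ▸ h S hS (by convert hSk)

lemma fk_le_card_of_isVertexCover [Fintype V] {S : Finset V} (hS : G.IsVertexCover (S : Set V))
    (k : ℕ) : fk G k ≤ #S := by
  classical
  refine fkOn_le G (subset_univ S) (equates_of_isIndepSet G ?_ k)
  rwa [← compl_eq_univ_sdiff, coe_compl, isIndepSet_compl_iff_isVertexCover]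

lemma exists_isVertexCover_card_le [Fintype V] [DecidableRel G.Adj] :
    ∃ S : Finset V, G.IsVertexCover (S : Set V) ∧ #S ≤ #G.edgeFinset := by
  classical
  refine ⟨G.edgeFinset.image (·.out.1), fun v w hvw => ?_, card_image_le⟩
  have hmem : s(v, w).out.1 ∈ G.edgeFinset.image (·.out.1) :=
    mem_image_of_mem _ (G.mem_edgeFinset.mpr hvw)
  rcases Sym2.mem_iff.mp (Sym2.out_fst_mem s(v, w)) with h | h
  exacts [Or.inl (h ▸ hmem), Or.inr (h ▸ hmem)]

lemma two_mul_card_edgeFinset_of_degree_le_one [Fintype V] [DecidableRel G.Adj]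
    (h : ∀ v, G.degree v ≤ 1) : 2 * #G.edgeFinset = #{v | G.degree v = 1} := by
  rw [← sum_degrees_eq_twice_card_edges, card_filter]
  refine sum_congr rfl fun v _ => ?_
  have := h v
  split_ifs <;> omega

theorem fk_le_of_maxDegOn_le_one [Fintype V] {k : ℕ} (hG : maxDegOn G univ ≤ 1) :
    fk G k ≤ (k - 1) / 2 := by
  classical
  have hdeg : ∀ v, G.degree v ≤ 1 := fun v =>
    degOn_univ G v ▸ (degOn_le_maxDegOn G (mem_univ v)).trans hG
  rcases lt_or_ge #{v | G.degree v = 1} k with hk | hk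
  · obtain ⟨S, hS, hSE⟩ := exists_isVertexCover_card_le G
    have := two_mul_card_edgeFinset_of_degree_le_one G hdeg
    have := fk_le_card_of_isVertexCover G hS k
    omega
  · have hmax : (univ.filter fun v => G.degree v = 1) ⊆
        univ.filter fun v => degOn G univ v = maxDegOn G univ := by
      intro v hv
      have hv : degOn G univ v = 1 := (degOn_univ G v).trans (mem_filter.mp hv).2
      have := degOn_le_maxDegOn G (mem_univ v)
      exact mem_filter.mpr ⟨mem_univ v, by omega⟩
    have : fk G k ≤ #(∅ : Finset V) := fkOn_le G (empty_subset univ)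
      (Or.inr (by rw [sdiff_empty]; exact hk.trans (card_le_card hmax)))
    rw [card_empty] at this
    omega

end

/-- The edges `{2t, 2t + 1}` for `t < m`; all other vertices of `Fin n` are isolated. -/
def pairGraph (m n : ℕ) : SimpleGraph (Fin n) where
  Adj i j := i ≠ j ∧ (i : ℕ) / 2 = j / 2 ∧ (i : ℕ) / 2 < m
  symm := ⟨fun _ _ h => ⟨h.1.symm, h.2.1.symm, h.2.1 ▸ h.2.2⟩⟩
  loopless := ⟨fun _ h => h.1 rfl⟩

namespace pairGraph

variable {m n : ℕ}

lemma adj_iff {v w : Fin n} :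
    (pairGraph m n).Adj v w ↔ v ≠ w ∧ (v : ℕ) / 2 = w / 2 ∧ (v : ℕ) / 2 < m :=
  Iff.rfl

lemma adj_unique {v w w' : Fin n} (hw : (pairGraph m n).Adj v w)
    (hw' : (pairGraph m n).Adj v w') : w = w' := by
  obtain ⟨hvw, h, -⟩ := adj_iff.mp hw
  obtain ⟨hvw', h', -⟩ := adj_iff.mp hw'
  have := Fin.val_ne_of_ne hvw
  have := Fin.val_ne_of_ne hvw'
  exact Fin.ext (by omega)

lemma adj_pair {t : ℕ} (ht : t < m) (hn : 2 * m ≤ n) :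
    (pairGraph m n).Adj ⟨2 * t, by omega⟩ ⟨2 * t + 1, by omega⟩ :=
  adj_iff.mpr ⟨Fin.ne_of_val_ne (show 2 * t ≠ 2 * t + 1 by omega),
    show 2 * t / 2 = (2 * t + 1) / 2 by omega, show 2 * t / 2 < m by omega⟩

lemma val_lt_of_adj {v w : Fin n} (h : (pairGraph m n).Adj v w) : (v : ℕ) < 2 * m := by
  have := (adj_iff.mp h).2.2
  omega

lemma maxDegOn_le_one (A : Finset (Fin n)) : maxDegOn (pairGraph m n) A ≤ 1 :=
  _root_.maxDegOn_le_one _ (fun _ _ _ => adj_unique) A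

lemma maxDegOn_univ (hm : 0 < m) (hn : 2 * m ≤ n) : maxDegOn (pairGraph m n) univ = 1 :=
  maxDegOn_eq_one_of_adj _ (maxDegOn_le_one _) (mem_univ _) (mem_univ _) (adj_pair hm hn)

lemma exists_pair_notMem {S : Finset (Fin n)} (hS : #S < m) (hn : 2 * m ≤ n) :
    ∃ t, ∃ ht : t < m, (⟨2 * t, by omega⟩ : Fin n) ∉ S ∧ (⟨2 * t + 1, by omega⟩ : Fin n) ∉ S := by
  obtain ⟨t, ht, htS⟩ := exists_mem_notMem_of_card_lt_card
    (s := S.image fun v : Fin n => (v : ℕ) / 2) (t := range m)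
    (by grind [card_image_le, card_range])
  refine ⟨t, mem_range.mp ht, fun h => htS ?_, fun h => htS ?_⟩ <;>
    exact mem_image.mpr ⟨_, h, by simp only; omega⟩

theorem le_fk {k : ℕ} (hmk : 2 * m < k) : m ≤ fk (pairGraph m (2 * m + k)) k := by
  refine le_fkOn _ fun S _ hS => ?_
  by_contra! hlt
  obtain ⟨t, ht, ha, hb⟩ := exists_pair_notMem hlt (by omega)
  have hD : #(univ.filter fun v : Fin (2 * m + k) => (v : ℕ) < 2 * m) ≤ 2 * m := by
    simpa using card_le_card_of_injOn Fin.val (t := range (2 * m))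
      (fun v hv => mem_range.mpr (mem_filter.mp hv).2) Fin.val_injective.injOn
  refine not_equates_of_adj _ (maxDegOn_le_one _) (mem_sdiff.mpr ⟨mem_univ _, ha⟩)
    (mem_sdiff.mpr ⟨mem_univ _, hb⟩) (adj_pair ht (by omega))
    (fun v w h => mem_filter.mpr ⟨mem_univ v, val_lt_of_adj h⟩) (hD.trans_lt hmk) ?_ hS
  rw [card_univ_sdiff, Fintype.card_fin]
  omega

end pairGraph

/-- For every `k ≥ 2` and every finite simple graph `G` with maximum
degree at most `1`, `f_k(G) ≤ ⌊(k-1)/2⌋`; moreover for every `k ≥ 3` there is a graph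
with maximum degree exactly `1` and `f_k(G) = ⌊(k-1)/2⌋`. -/
theorem stmt16 :
    (∀ (k : ℕ), 2 ≤ k → ∀ (V : Type u) [Fintype V] (G : SimpleGraph V),
      maxDegOn G Finset.univ ≤ 1 → fk G k ≤ (k - 1) / 2) ∧
    (∀ (k : ℕ), 3 ≤ k → ∃ (n : ℕ) (G : SimpleGraph (Fin n)),
      maxDegOn G Finset.univ = 1 ∧ fk G k = (k - 1) / 2) := by
  refine ⟨fun k _ V _ G hG => fk_le_of_maxDegOn_le_one G hG, fun k hk => ?_⟩
  have hmax := pairGraph.maxDegOn_univ (m := (k - 1) / 2) (n := 2 * ((k - 1) / 2) + k)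
    (by omega) (by omega)
  exact ⟨_, _, hmax, (fk_le_of_maxDegOn_le_one _ hmax.le).antisymm (pairGraph.le_fk (by omega))⟩
end

section
/- Let k ≥ 2 be an integer and let G be a finite simple graph with maximum degree at most 2. If k is odd and G has at least 2k − 1 vertices, or k is even and G has at least 2k − 2 vertices, then G is k-feasible. -/
open Finset

variable {V : Type*}

open scoped Classical in
/-- `G` is `k`-feasible: some induced subgraph `H` of `G` has at least `k` vertices
whose degree in `H` equals the maximum degree of `H`. -/
def kFeasible (G : SimpleGraph V) (k : ℕ) : Prop :=
  ∃ A : Finset V, k ≤ (A.filter fun v => degOn G A v = maxDegOn G A).card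

section Helpers
open scoped Classical

variable (G : SimpleGraph V)

lemma degOn_mono {A B : Finset V} (h : B ⊆ A) (v : V) : degOn G B v ≤ degOn G A v :=
  card_le_card (filter_subset_filter _ h)

lemma degOn_eq_zero_iff {A : Finset V} {v : V} :
    degOn G A v = 0 ↔ ∀ w ∈ A, ¬ G.Adj v w := by
  simp [degOn, card_eq_zero, filter_eq_empty_iff]

lemma degOn_insert_of_not_adj {A : Finset V} {u p : V} (h : ¬ G.Adj u p) :
    degOn G (insert p A) u = degOn G A u := by
  simp [degOn, filter_insert, h]

lemma degOn_insert_of_adj {A : Finset V} {u p : V} (hp : p ∉ A) (h : G.Adj u p) :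
    degOn G (insert p A) u = degOn G A u + 1 := by
  simp only [degOn, filter_insert, if_pos h]
  rw [card_insert_of_notMem (fun hc => hp (mem_of_mem_filter _ hc))]

/-- `degOn` drops strictly when removing a neighbour. -/
lemma degOn_lt_of_removed {A A' : Finset V} {a x : V} (hsub : A' ⊆ A)
    (hxA : x ∈ A) (hxA' : x ∉ A') (hadj : G.Adj a x) :
    degOn G A' a < degOn G A a := by
  have h1 : (A'.filter fun w => G.Adj a w) ⊆ (A.filter fun w => G.Adj a w).erase x := by
    intro w hw
    rw [mem_erase]
    refine ⟨fun hwx => hxA' (hwx ▸ (mem_of_mem_filter _ hw)), filter_subset_filter _ hsub hw⟩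
  have h2 : x ∈ A.filter fun w => G.Adj a w := mem_filter.2 ⟨hxA, hadj⟩
  calc degOn G A' a ≤ ((A.filter fun w => G.Adj a w).erase x).card := card_le_card h1
    _ < (A.filter fun w => G.Adj a w).card := card_erase_lt_of_mem h2

end Helpers

section Helpers2
open scoped Classical

variable (G : SimpleGraph V)

lemma nbhd_eq_singleton {A : Finset V} {v : V} (h : degOn G A v = 1) :
    ∃ u, u ∈ A ∧ G.Adj v u ∧ ∀ w ∈ A, G.Adj v w → w = u := by
  obtain ⟨u, hu⟩ := card_eq_one.1 h
  have humem : u ∈ A.filter fun w => G.Adj v w := hu ▸ mem_singleton_self u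
  rw [mem_filter] at humem
  exact ⟨u, humem.1, humem.2, fun w hw hadj => by
    have : w ∈ A.filter fun w => G.Adj v w := mem_filter.2 ⟨hw, hadj⟩
    rw [hu, mem_singleton] at this; exact this⟩

lemma nbhd_eq_pair {A : Finset V} {v : V} (h : degOn G A v = 2) :
    ∃ x y, x ≠ y ∧ x ∈ A ∧ y ∈ A ∧ G.Adj v x ∧ G.Adj v y ∧
      ∀ w ∈ A, G.Adj v w → w = x ∨ w = y := by
  obtain ⟨x, y, hxy, hu⟩ := card_eq_two.1 h
  have hx : x ∈ A.filter fun w => G.Adj v w := hu ▸ mem_insert_self x {y}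
  have hy : y ∈ A.filter fun w => G.Adj v w := hu ▸ (by simp)
  rw [mem_filter] at hx hy
  refine ⟨x, y, hxy, hx.1, hy.1, hx.2, hy.2, fun w hw hadj => ?_⟩
  have : w ∈ A.filter fun w => G.Adj v w := mem_filter.2 ⟨hw, hadj⟩
  rw [hu] at this; simpa using this

/-- Inserting an isolated-from-`B` vertex keeps a set independent. -/
lemma indep_insert {B : Finset V} {v : V}
    (hB : ∀ w ∈ B, degOn G B w = 0) (hv : ∀ w ∈ B, ¬ G.Adj v w) :
    ∀ u ∈ insert v B, degOn G (insert v B) u = 0 := by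
  intro u hu
  rw [degOn_eq_zero_iff]
  intro w hw hadj
  rw [mem_insert] at hu hw
  rcases hu with rfl | hu <;> rcases hw with rfl | hw
  · exact G.irrefl hadj
  · exact hv w hw hadj
  · exact hv u hu hadj.symm
  · exact (degOn_eq_zero_iff G).1 (hB u hu) w hw hadj

/-- Inserting an isolated edge `{p,q}` keeps a set a perfect induced matching. -/
lemma matching_insert {B : Finset V} {p q : V}
    (hB : ∀ w ∈ B, degOn G B w = 1) (hpq : G.Adj p q)
    (hpB : p ∉ B) (hqB : q ∉ B)
    (hp : ∀ w ∈ B, ¬ G.Adj p w) (hq : ∀ w ∈ B, ¬ G.Adj q w) :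
    ∀ u ∈ insert p (insert q B), degOn G (insert p (insert q B)) u = 1 := by
  have hpq' : p ≠ q := G.ne_of_adj hpq
  intro u hu
  rw [mem_insert, mem_insert] at hu
  rcases hu with rfl | rfl | hu
  · rw [degOn_insert_of_not_adj G G.irrefl, degOn_insert_of_adj G hqB hpq,
      (degOn_eq_zero_iff G).2 hp]
  · rw [degOn_insert_of_adj G (by simp [hpq', hpB] : p ∉ insert u B) hpq.symm,
      degOn_insert_of_not_adj G G.irrefl, (degOn_eq_zero_iff G).2 hq]
  · rw [degOn_insert_of_not_adj G (fun hc => hp u hu hc.symm),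
      degOn_insert_of_not_adj G (fun hc => hq u hu hc.symm)]
    exact hB u hu

/-- Degree-2 vertices of a subset are degree-2 vertices of the ambient set. -/
lemma deg2_subset {A A' : Finset V} (hsub : A' ⊆ A) (hA : ∀ v ∈ A, degOn G A v ≤ 2) :
    (A'.filter fun v => degOn G A' v = 2) ⊆ (A.filter fun v => degOn G A v = 2) := by
  intro v hv
  rw [mem_filter] at hv ⊢
  refine ⟨hsub hv.1, le_antisymm (hA v (hsub hv.1)) ?_⟩
  calc 2 = degOn G A' v := hv.2.symm
    _ ≤ degOn G A v := degOn_mono G hsub v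

end Helpers2

section Key
open scoped Classical

variable (G : SimpleGraph V)

lemma nbhd_eq_pair_with {A : Finset V} {u v : V} (h : degOn G A u = 2)
    (hv : v ∈ A) (hadj : G.Adj u v) :
    ∃ w, w ∈ A ∧ w ≠ v ∧ G.Adj u w ∧ ∀ z ∈ A, G.Adj u z → z = v ∨ z = w := by
  obtain ⟨x, y, hxy, hxA, hyA, hux, huy, huniq⟩ := nbhd_eq_pair G h
  rcases huniq v hv hadj with rfl | rfl
  · exact ⟨y, hyA, fun hc => hxy hc.symm, huy, fun z hz hadjz => huniq z hz hadjz⟩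
  · exact ⟨x, hxA, hxy, hux, fun z hz hadjz => (huniq z hz hadjz).symm⟩

lemma card_add_le_of_subset_disjoint {D D' S : Finset V} (h1 : D' ⊆ D) (h2 : S ⊆ D)
    (h3 : Disjoint D' S) : D'.card + S.card ≤ D.card := by
  rw [← card_union_of_disjoint h3]
  exact card_le_card (union_subset h1 h2)

open scoped Classical in
lemma keyLemma :
    ∀ (n : ℕ) (A : Finset V), A.card = n → (∀ v ∈ A, degOn G A v ≤ 2) →
    ∃ B0 B1 : Finset V, B0 ⊆ A ∧ B1 ⊆ A ∧
      (∀ v ∈ B0, degOn G B0 v = 0) ∧ (∀ v ∈ B1, degOn G B1 v = 1) ∧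
      Even B1.card ∧
      2 * A.card ≤ 2 * B0.card + B1.card + (A.filter fun v => degOn G A v = 2).card := by
  intro n
  induction n using Nat.strong_induction_on with
  | _ n IH =>
  intro A hcard hdeg
  rcases A.eq_empty_or_nonempty with rfl | ⟨v0, hv0⟩
  · exact ⟨∅, ∅, by simp⟩
  by_cases h0 : ∃ v ∈ A, degOn G A v = 0
  · -- Case 1 : an isolated vertex
    obtain ⟨v, hvA, hv0deg⟩ := h0
    have hnadj : ∀ w ∈ A, ¬ G.Adj v w := (degOn_eq_zero_iff G).1 hv0deg
    set A' := A \ {v} with hA'def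
    have hA'sub : A' ⊆ A := sdiff_subset
    have hA'deg : ∀ w ∈ A', degOn G A' w ≤ 2 :=
      fun w hw => le_trans (degOn_mono G hA'sub w) (hdeg w (hA'sub hw))
    have hcc : A'.card + ({v} : Finset V).card = A.card :=
      card_sdiff_add_card_eq_card (singleton_subset_iff.2 hvA)
    rw [card_singleton] at hcc
    obtain ⟨B0, B1, hB0sub, hB1sub, hB0, hB1, heven, hineq⟩ :=
      IH A'.card (by omega) A' rfl hA'deg
    have hvB0 : v ∉ B0 := fun hc => (mem_sdiff.1 (hB0sub hc)).2 (mem_singleton_self v)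
    refine ⟨insert v B0, B1, insert_subset hvA (hB0sub.trans hA'sub), hB1sub.trans hA'sub,
      indep_insert G hB0 (fun w hw => hnadj w (hA'sub (hB0sub hw))), hB1, heven, ?_⟩
    have hD : (A'.filter fun w => degOn G A' w = 2).card ≤
        (A.filter fun w => degOn G A w = 2).card :=
      card_le_card (deg2_subset G hA'sub hdeg)
    rw [card_insert_of_notMem hvB0]
    omega
  by_cases h1 : ∃ v ∈ A, degOn G A v = 1
  · -- Case 2 : a degree-one vertex
    obtain ⟨v, hvA, hv1deg⟩ := h1
    obtain ⟨u, huA, hadj_vu, huniq_v⟩ := nbhd_eq_singleton G hv1deg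
    have hvu : v ≠ u := G.ne_of_adj hadj_vu
    have hdu : degOn G A u = 1 ∨ degOn G A u = 2 := by
      have h2 := hdeg u huA
      have h3 : 0 < degOn G A u := by
        have : (0:ℕ) < (A.filter fun z => G.Adj u z).card :=
          card_pos.2 ⟨v, mem_filter.2 ⟨hvA, hadj_vu.symm⟩⟩
        exact this
      omega
    rcases hdu with hdu1 | hdu2
    · -- Case 2a : component K₂
      obtain ⟨u2, hu2A, hadj2, huniq_u'⟩ := nbhd_eq_singleton G hdu1
      have hu2v : u2 = v := ((huniq_u' v hvA hadj_vu.symm)).symm ▸ rfl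
      have huniq_u : ∀ z ∈ A, G.Adj u z → z = v := by
        intro z hz hadj
        rw [huniq_u' z hz hadj, ← huniq_u' v hvA hadj_vu.symm]
      set A' := A \ ({v, u} : Finset V) with hA'def
      have hRsub : ({v, u} : Finset V) ⊆ A :=
        insert_subset hvA (singleton_subset_iff.2 huA)
      have hA'sub : A' ⊆ A := sdiff_subset
      have hA'deg : ∀ z ∈ A', degOn G A' z ≤ 2 :=
        fun z hz => le_trans (degOn_mono G hA'sub z) (hdeg z (hA'sub hz))
      have hcc : A'.card + ({v, u} : Finset V).card = A.card :=
        card_sdiff_add_card_eq_card hRsub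
      have hR2 : ({v, u} : Finset V).card = 2 := by
        rw [card_insert_of_notMem (notMem_singleton.2 hvu), card_singleton]
      rw [hR2] at hcc
      obtain ⟨B0, B1, hB0sub, hB1sub, hB0, hB1, heven, hineq⟩ :=
        IH A'.card (by omega) A' rfl hA'deg
      have hnadjv : ∀ z ∈ A', ¬ G.Adj v z := by
        intro z hz hadj
        exact (mem_sdiff.1 hz).2 (by rw [huniq_v z (hA'sub hz) hadj]; simp)
      have hnadju : ∀ z ∈ A', ¬ G.Adj u z := by
        intro z hz hadj
        exact (mem_sdiff.1 hz).2 (by rw [huniq_u z (hA'sub hz) hadj]; simp)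
      have hvB0 : v ∉ B0 := fun hc => (mem_sdiff.1 (hB0sub hc)).2 (by simp)
      have hvB1 : v ∉ B1 := fun hc => (mem_sdiff.1 (hB1sub hc)).2 (by simp)
      have huB1 : u ∉ B1 := fun hc => (mem_sdiff.1 (hB1sub hc)).2 (by simp)
      have hc1 : (insert v (insert u B1)).card = B1.card + 2 := by
        rw [card_insert_of_notMem (by simp [hvu, hvB1]),
          card_insert_of_notMem huB1]
      refine ⟨insert v B0, insert v (insert u B1),
        insert_subset hvA (hB0sub.trans hA'sub),
        insert_subset hvA (insert_subset huA (hB1sub.trans hA'sub)),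
        indep_insert G hB0 (fun z hz => hnadjv z (hB0sub hz)),
        matching_insert G hB1 hadj_vu hvB1 huB1
          (fun z hz => hnadjv z (hB1sub hz)) (fun z hz => hnadju z (hB1sub hz)),
        by rw [hc1]; exact heven.add even_two, ?_⟩
      have hD : (A'.filter fun z => degOn G A' z = 2).card ≤
          (A.filter fun z => degOn G A z = 2).card :=
        card_le_card (deg2_subset G hA'sub hdeg)
      rw [hc1, card_insert_of_notMem hvB0]
      omega
    · -- Case 2b : neighbour of degree two
      obtain ⟨w, hwA, hwv, hadj_uw, huniq_u⟩ := nbhd_eq_pair_with G hdu2 hvA hadj_vu.symm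
      have huw : u ≠ w := G.ne_of_adj hadj_uw
      by_cases hdw : degOn G A w = 2
      · -- Case 2b-i : remove v and u
        set A' := A \ ({v, u} : Finset V) with hA'def
        have hRsub : ({v, u} : Finset V) ⊆ A :=
          insert_subset hvA (singleton_subset_iff.2 huA)
        have hA'sub : A' ⊆ A := sdiff_subset
        have hA'deg : ∀ z ∈ A', degOn G A' z ≤ 2 :=
          fun z hz => le_trans (degOn_mono G hA'sub z) (hdeg z (hA'sub hz))
        have hcc : A'.card + ({v, u} : Finset V).card = A.card :=
          card_sdiff_add_card_eq_card hRsub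
        have hR2 : ({v, u} : Finset V).card = 2 := by
          rw [card_insert_of_notMem (notMem_singleton.2 hvu), card_singleton]
        rw [hR2] at hcc
        obtain ⟨B0, B1, hB0sub, hB1sub, hB0, hB1, heven, hineq⟩ :=
          IH A'.card (by omega) A' rfl hA'deg
        have hnadjv : ∀ z ∈ A', ¬ G.Adj v z := by
          intro z hz hadj
          exact (mem_sdiff.1 hz).2 (by rw [huniq_v z (hA'sub hz) hadj]; simp)
        have hvB0 : v ∉ B0 := fun hc => (mem_sdiff.1 (hB0sub hc)).2 (by simp)
        have huA' : u ∉ A' := fun hc => (mem_sdiff.1 hc).2 (by simp)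
        have hS : ({u, w} : Finset V) ⊆ A.filter fun z => degOn G A z = 2 := by
          intro z hz
          rcases mem_insert.1 hz with rfl | hz
          · exact mem_filter.2 ⟨huA, hdu2⟩
          · rw [mem_singleton] at hz
            subst hz
            exact mem_filter.2 ⟨hwA, hdw⟩
        have hdisj : Disjoint (A'.filter fun z => degOn G A' z = 2) ({u, w} : Finset V) := by
          rw [disjoint_right]
          intro z hz hz'
          rcases mem_insert.1 hz with rfl | hz
          · exact huA' (mem_of_mem_filter _ hz')
          · rw [mem_singleton] at hz
            subst hz
            have hlt : degOn G A' z < degOn G A z :=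
              degOn_lt_of_removed G hA'sub huA huA' hadj_uw.symm
            rw [hdw, (mem_filter.1 hz').2] at hlt
            omega
        have hdd : (A'.filter fun z => degOn G A' z = 2).card + 2 ≤
            (A.filter fun z => degOn G A z = 2).card := by
          have := card_add_le_of_subset_disjoint
            (deg2_subset G hA'sub hdeg) hS hdisj
          rwa [card_insert_of_notMem (notMem_singleton.2 huw), card_singleton] at this
        refine ⟨insert v B0, B1, insert_subset hvA (hB0sub.trans hA'sub),
          hB1sub.trans hA'sub,
          indep_insert G hB0 (fun z hz => hnadjv z (hB0sub hz)), hB1, heven, ?_⟩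
        rw [card_insert_of_notMem hvB0]
        omega
      · -- Case 2b-ii : component P₃, remove v, u, w
        have hdw1 : degOn G A w = 1 := by
          have h2 := hdeg w hwA
          have h3 : 0 < degOn G A w := by
            have : (0:ℕ) < (A.filter fun z => G.Adj w z).card :=
              card_pos.2 ⟨u, mem_filter.2 ⟨huA, hadj_uw.symm⟩⟩
            exact this
          omega
        obtain ⟨w2, hw2A, hadjw2, huniq_w'⟩ := nbhd_eq_singleton G hdw1
        have huniq_w : ∀ z ∈ A, G.Adj w z → z = u := by
          intro z hz hadj
          rw [huniq_w' z hz hadj, ← huniq_w' u huA hadj_uw.symm]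
        have hvw : v ≠ w := fun hc => hwv hc.symm
        set A' := A \ ({v, u, w} : Finset V) with hA'def
        have hRsub : ({v, u, w} : Finset V) ⊆ A :=
          insert_subset hvA (insert_subset huA (singleton_subset_iff.2 hwA))
        have hA'sub : A' ⊆ A := sdiff_subset
        have hA'deg : ∀ z ∈ A', degOn G A' z ≤ 2 :=
          fun z hz => le_trans (degOn_mono G hA'sub z) (hdeg z (hA'sub hz))
        have hcc : A'.card + ({v, u, w} : Finset V).card = A.card :=
          card_sdiff_add_card_eq_card hRsub
        have hR3 : ({v, u, w} : Finset V).card = 3 := by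
          rw [card_insert_of_notMem (by simp [hvu, hvw]),
            card_insert_of_notMem (notMem_singleton.2 huw), card_singleton]
        rw [hR3] at hcc
        obtain ⟨B0, B1, hB0sub, hB1sub, hB0, hB1, heven, hineq⟩ :=
          IH A'.card (by omega) A' rfl hA'deg
        have hnadjv : ∀ z ∈ A', ¬ G.Adj v z := by
          intro z hz hadj
          exact (mem_sdiff.1 hz).2 (by rw [huniq_v z (hA'sub hz) hadj]; simp)
        have hnadju : ∀ z ∈ A', ¬ G.Adj u z := by
          intro z hz hadj
          rcases huniq_u z (hA'sub hz) hadj with rfl | rfl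
          · exact (mem_sdiff.1 hz).2 (by simp)
          · exact (mem_sdiff.1 hz).2 (by simp)
        have hnadjw : ∀ z ∈ A', ¬ G.Adj w z := by
          intro z hz hadj
          exact (mem_sdiff.1 hz).2 (by rw [huniq_w z (hA'sub hz) hadj]; simp)
        have hvB0 : v ∉ B0 := fun hc => (mem_sdiff.1 (hB0sub hc)).2 (by simp)
        have hwB0 : w ∉ B0 := fun hc => (mem_sdiff.1 (hB0sub hc)).2 (by simp)
        have hvB1 : v ∉ B1 := fun hc => (mem_sdiff.1 (hB1sub hc)).2 (by simp)
        have huB1 : u ∉ B1 := fun hc => (mem_sdiff.1 (hB1sub hc)).2 (by simp)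
        have hnadj_vw : ¬ G.Adj v w := fun hc => huw.symm (huniq_v w hwA hc ▸ rfl)
        have hB0new : ∀ z ∈ insert v (insert w B0), degOn G (insert v (insert w B0)) z = 0 := by
          refine indep_insert G (indep_insert G hB0 (fun z hz => hnadjw z (hB0sub hz))) ?_
          intro z hz
          rcases mem_insert.1 hz with rfl | hz
          · exact hnadj_vw
          · exact hnadjv z (hB0sub hz)
        have hc0 : (insert v (insert w B0)).card = B0.card + 2 := by
          rw [card_insert_of_notMem (by simp [hvw, hvB0]),
            card_insert_of_notMem hwB0]
        have hc1 : (insert v (insert u B1)).card = B1.card + 2 := by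
          rw [card_insert_of_notMem (by simp [hvu, hvB1]),
            card_insert_of_notMem huB1]
        refine ⟨insert v (insert w B0), insert v (insert u B1),
          insert_subset hvA (insert_subset hwA (hB0sub.trans hA'sub)),
          insert_subset hvA (insert_subset huA (hB1sub.trans hA'sub)),
          hB0new,
          matching_insert G hB1 hadj_vu hvB1 huB1
            (fun z hz => hnadjv z (hB1sub hz)) (fun z hz => hnadju z (hB1sub hz)),
          by rw [hc1]; exact heven.add even_two, ?_⟩
        have hD : (A'.filter fun z => degOn G A' z = 2).card ≤
            (A.filter fun z => degOn G A z = 2).card :=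
          card_le_card (deg2_subset G hA'sub hdeg)
        rw [hc0, hc1]
        omega
  · -- Case 3 : all degrees equal 2
    have h2 : ∀ v ∈ A, degOn G A v = 2 := by
      intro v hv
      have := hdeg v hv
      have h0' : degOn G A v ≠ 0 := fun hc => h0 ⟨v, hv, hc⟩
      have h1' : degOn G A v ≠ 1 := fun hc => h1 ⟨v, hv, hc⟩
      omega
    have hv2 : degOn G A v0 = 2 := h2 v0 hv0
    obtain ⟨x, y, hxy, hxA, hyA, hvx, hvy, huniq_v⟩ := nbhd_eq_pair G hv2
    obtain ⟨a, haA, hav, hadj_xa, huniq_x⟩ := nbhd_eq_pair_with G (h2 x hxA) hv0 hvx.symm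
    obtain ⟨b, hbA, hbv, hadj_yb, huniq_y⟩ := nbhd_eq_pair_with G (h2 y hyA) hv0 hvy.symm
    have hvx' : v0 ≠ x := G.ne_of_adj hvx
    have hvy' : v0 ≠ y := G.ne_of_adj hvy
    set A' := A \ ({v0, x, y} : Finset V) with hA'def
    have hRsub : ({v0, x, y} : Finset V) ⊆ A :=
      insert_subset hv0 (insert_subset hxA (singleton_subset_iff.2 hyA))
    have hA'sub : A' ⊆ A := sdiff_subset
    have hA'deg : ∀ z ∈ A', degOn G A' z ≤ 2 :=
      fun z hz => le_trans (degOn_mono G hA'sub z) (hdeg z (hA'sub hz))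
    have hcc : A'.card + ({v0, x, y} : Finset V).card = A.card :=
      card_sdiff_add_card_eq_card hRsub
    have hR3 : ({v0, x, y} : Finset V).card = 3 := by
      rw [card_insert_of_notMem (by simp [hvx', hvy']),
        card_insert_of_notMem (notMem_singleton.2 hxy), card_singleton]
    rw [hR3] at hcc
    obtain ⟨B0, B1, hB0sub, hB1sub, hB0, hB1, heven, hineq⟩ :=
      IH A'.card (by omega) A' rfl hA'deg
    have hnadjv : ∀ z ∈ A', ¬ G.Adj v0 z := by
      intro z hz hadj
      rcases huniq_v z (hA'sub hz) hadj with rfl | rfl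
      · exact (mem_sdiff.1 hz).2 (by simp)
      · exact (mem_sdiff.1 hz).2 (by simp)
    have hvB0 : v0 ∉ B0 := fun hc => (mem_sdiff.1 (hB0sub hc)).2 (by simp)
    have hxA' : x ∉ A' := fun hc => (mem_sdiff.1 hc).2 (by simp)
    have hyA' : y ∉ A' := fun hc => (mem_sdiff.1 hc).2 (by simp)
    have hD'sub : (A'.filter fun z => degOn G A' z = 2) ⊆
        (A.filter fun z => degOn G A z = 2) := deg2_subset G hA'sub hdeg
    by_cases hadj_xy : G.Adj x y
    · -- Case 3a : a triangle component
      have hay : a = y := by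
        rcases huniq_x y hyA hadj_xy with h | h
        · exact absurd h.symm hvy'
        · exact h.symm
      have hnadjx : ∀ z ∈ A', ¬ G.Adj x z := by
        intro z hz hadj
        rcases huniq_x z (hA'sub hz) hadj with rfl | rfl
        · exact (mem_sdiff.1 hz).2 (by simp)
        · exact (mem_sdiff.1 hz).2 (by simp [hay])
      have hvB1 : v0 ∉ B1 := fun hc => (mem_sdiff.1 (hB1sub hc)).2 (by simp)
      have hxB1 : x ∉ B1 := fun hc => (mem_sdiff.1 (hB1sub hc)).2 (by simp)
      have hc1 : (insert v0 (insert x B1)).card = B1.card + 2 := by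
        rw [card_insert_of_notMem (by simp [hvx', hvB1]),
          card_insert_of_notMem hxB1]
      have hS : ({x, y} : Finset V) ⊆ A.filter fun z => degOn G A z = 2 := by
        intro z hz
        rcases mem_insert.1 hz with rfl | hz
        · exact mem_filter.2 ⟨hxA, h2 z hxA⟩
        · rw [mem_singleton] at hz
          subst hz
          exact mem_filter.2 ⟨hyA, h2 z hyA⟩
      have hdisj : Disjoint (A'.filter fun z => degOn G A' z = 2) ({x, y} : Finset V) := by
        rw [disjoint_right]
        intro z hz hz'
        rcases mem_insert.1 hz with rfl | hz
        · exact hxA' (mem_of_mem_filter _ hz')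
        · rw [mem_singleton] at hz
          subst hz
          exact hyA' (mem_of_mem_filter _ hz')
      have hdd : (A'.filter fun z => degOn G A' z = 2).card + 2 ≤
          (A.filter fun z => degOn G A z = 2).card := by
        have := card_add_le_of_subset_disjoint hD'sub hS hdisj
        rwa [card_insert_of_notMem (notMem_singleton.2 hxy), card_singleton] at this
      refine ⟨insert v0 B0, insert v0 (insert x B1),
        insert_subset hv0 (hB0sub.trans hA'sub),
        insert_subset hv0 (insert_subset hxA (hB1sub.trans hA'sub)),
        indep_insert G hB0 (fun z hz => hnadjv z (hB0sub hz)),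
        matching_insert G hB1 hvx hvB1 hxB1
          (fun z hz => hnadjv z (hB1sub hz)) (fun z hz => hnadjx z (hB1sub hz)),
        by rw [hc1]; exact heven.add even_two, ?_⟩
      rw [hc1, card_insert_of_notMem hvB0]
      omega
    · -- Case 3b/3c : no edge between x and y
      have hax : a ≠ x := (G.ne_of_adj hadj_xa).symm
      have hay : a ≠ y := fun hc => hadj_xy (hc ▸ hadj_xa)
      have hbx : b ≠ x := fun hc => hadj_xy (hc ▸ hadj_yb).symm
      have hby : b ≠ y := (G.ne_of_adj hadj_yb).symm
      have haA' : a ∈ A' := mem_sdiff.2 ⟨haA, by simp [hav, hax, hay]⟩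
      have hbA' : b ∈ A' := mem_sdiff.2 ⟨hbA, by simp [hbv, hbx, hby]⟩
      have ha_lt : degOn G A' a < degOn G A a :=
        degOn_lt_of_removed G hA'sub hxA hxA' hadj_xa.symm
      have hb_lt : degOn G A' b < degOn G A b :=
        degOn_lt_of_removed G hA'sub hyA hyA' hadj_yb.symm
      have haD' : a ∉ (A'.filter fun z => degOn G A' z = 2) := by
        intro hc
        rw [(mem_filter.1 hc).2, h2 a haA] at ha_lt
        omega
      have hbD' : b ∉ (A'.filter fun z => degOn G A' z = 2) := by
        intro hc
        rw [(mem_filter.1 hc).2, h2 b hbA] at hb_lt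
        omega
      have hv0A' : v0 ∉ A' := fun hc => (mem_sdiff.1 hc).2 (by simp)
      by_cases hab : a = b
      · -- Case 3c
        subst hab
        have hS : ({v0, x, y, a} : Finset V) ⊆ A.filter fun z => degOn G A z = 2 := by
          intro z hz
          simp only [mem_insert, mem_singleton] at hz
          rcases hz with rfl | rfl | rfl | rfl
          · exact mem_filter.2 ⟨hv0, h2 z hv0⟩
          · exact mem_filter.2 ⟨hxA, h2 z hxA⟩
          · exact mem_filter.2 ⟨hyA, h2 z hyA⟩
          · exact mem_filter.2 ⟨haA, h2 z haA⟩
        have hdisj : Disjoint (A'.filter fun z => degOn G A' z = 2)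
            ({v0, x, y, a} : Finset V) := by
          rw [disjoint_right]
          intro z hz hz'
          simp only [mem_insert, mem_singleton] at hz
          rcases hz with rfl | rfl | rfl | rfl
          · exact hv0A' (mem_of_mem_filter _ hz')
          · exact hxA' (mem_of_mem_filter _ hz')
          · exact hyA' (mem_of_mem_filter _ hz')
          · exact haD' hz'
        have hS4 : ({v0, x, y, a} : Finset V).card = 4 := by
          rw [card_insert_of_notMem (by simp [hvx', hvy', Ne.symm hav]),
            card_insert_of_notMem (by simp [hxy, Ne.symm hax]),
            card_insert_of_notMem (by simp [Ne.symm hay]), card_singleton]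
        have hdd : (A'.filter fun z => degOn G A' z = 2).card + 4 ≤
            (A.filter fun z => degOn G A z = 2).card := by
          have := card_add_le_of_subset_disjoint hD'sub hS hdisj
          rwa [hS4] at this
        refine ⟨insert v0 B0, B1, insert_subset hv0 (hB0sub.trans hA'sub),
          hB1sub.trans hA'sub,
          indep_insert G hB0 (fun z hz => hnadjv z (hB0sub hz)), hB1, heven, ?_⟩
        rw [card_insert_of_notMem hvB0]
        omega
      · -- Case 3b
        have hS : ({x, y, a, b} : Finset V) ⊆ A.filter fun z => degOn G A z = 2 := by
          intro z hz
          simp only [mem_insert, mem_singleton] at hz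
          rcases hz with rfl | rfl | rfl | rfl
          · exact mem_filter.2 ⟨hxA, h2 z hxA⟩
          · exact mem_filter.2 ⟨hyA, h2 z hyA⟩
          · exact mem_filter.2 ⟨haA, h2 z haA⟩
          · exact mem_filter.2 ⟨hbA, h2 z hbA⟩
        have hdisj : Disjoint (A'.filter fun z => degOn G A' z = 2)
            ({x, y, a, b} : Finset V) := by
          rw [disjoint_right]
          intro z hz hz'
          simp only [mem_insert, mem_singleton] at hz
          rcases hz with rfl | rfl | rfl | rfl
          · exact hxA' (mem_of_mem_filter _ hz')
          · exact hyA' (mem_of_mem_filter _ hz')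
          · exact haD' hz'
          · exact hbD' hz'
        have hS4 : ({x, y, a, b} : Finset V).card = 4 := by
          rw [card_insert_of_notMem (by simp [hxy, Ne.symm hax, Ne.symm hbx]),
            card_insert_of_notMem (by simp [Ne.symm hay, Ne.symm hby]),
            card_insert_of_notMem (by simp [hab]), card_singleton]
        have hdd : (A'.filter fun z => degOn G A' z = 2).card + 4 ≤
            (A.filter fun z => degOn G A z = 2).card := by
          have := card_add_le_of_subset_disjoint hD'sub hS hdisj
          rwa [hS4] at this
        refine ⟨insert v0 B0, B1, insert_subset hv0 (hB0sub.trans hA'sub),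
          hB1sub.trans hA'sub,
          indep_insert G hB0 (fun z hz => hnadjv z (hB0sub hz)), hB1, heven, ?_⟩
        rw [card_insert_of_notMem hvB0]
        omega

end Key

/-- Let `k ≥ 2` and let `G` have maximum degree at most `2`.  If `k`
is odd and `G` has at least `2k - 1` vertices, or `k` is even and `G` has at least
`2k - 2` vertices, then `G` is `k`-feasible. -/
theorem stmt18 {V : Type*} [Fintype V] (G : SimpleGraph V) (k : ℕ) (hk : 2 ≤ k)
    (hΔ : maxDegOn G Finset.univ ≤ 2)
    (h : (Odd k ∧ 2 * k - 1 ≤ Fintype.card V) ∨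
         (Even k ∧ 2 * k - 2 ≤ Fintype.card V)) :
    kFeasible G k := by
  classical
  unfold kFeasible
  have hdeg : ∀ v ∈ (univ : Finset V), degOn G univ v ≤ 2 :=
    fun v hv => le_trans (Finset.le_sup hv) hΔ
  obtain ⟨B0, B1, hB0sub, hB1sub, hB0, hB1, heven, hineq⟩ :=
    keyLemma G Finset.univ.card Finset.univ rfl hdeg
  by_cases hk0 : k ≤ B0.card
  · refine ⟨B0, ?_⟩
    have hmax : maxDegOn G B0 = 0 :=
      Nat.le_zero.1 (Finset.sup_le fun v hv => (hB0 v hv).le)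
    have heq : B0.filter (fun v => degOn G B0 v = maxDegOn G B0) = B0 :=
      filter_true_of_mem (fun v hv => by rw [hB0 v hv, hmax])
    rw [heq]; exact hk0
  by_cases hk1 : k ≤ B1.card
  · refine ⟨B1, ?_⟩
    have hne : B1.Nonempty := card_pos.1 (lt_of_lt_of_le (by omega) hk1)
    have hmax : maxDegOn G B1 = 1 := by
      refine le_antisymm (Finset.sup_le fun v hv => (hB1 v hv).le) ?_
      obtain ⟨v, hv⟩ := hne
      calc 1 = degOn G B1 v := (hB1 v hv).symm
        _ ≤ _ := Finset.le_sup hv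
    have heq : B1.filter (fun v => degOn G B1 v = maxDegOn G B1) = B1 :=
      filter_true_of_mem (fun v hv => by rw [hB1 v hv, hmax])
    rw [heq]; exact hk1
  by_cases hk2 : k ≤ ((univ : Finset V).filter fun v => degOn G univ v = 2).card
  · refine ⟨univ, ?_⟩
    have hmax : maxDegOn G (univ : Finset V) = 2 := by
      refine le_antisymm hΔ ?_
      have hne : ((univ : Finset V).filter fun v => degOn G univ v = 2).Nonempty :=
        card_pos.1 (lt_of_lt_of_le (by omega) hk2)
      obtain ⟨v, hv⟩ := hne
      rw [mem_filter] at hv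
      calc 2 = degOn G univ v := hv.2.symm
        _ ≤ _ := Finset.le_sup hv.1
    rw [hmax]
    exact hk2
  · exfalso
    have hcard : (univ : Finset V).card = Fintype.card V := card_univ
    obtain ⟨t, ht⟩ := heven
    rcases h with ⟨hodd, hn⟩ | ⟨heve, hn⟩
    · omega
    · obtain ⟨s, hs⟩ := heve
      omega
end
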